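/- arXiv:2410.15428 — 6 statements merged into one kernel-verified Lean document; each statement's English description precedes it below -/
import Mathlib

section
/- For positive integers M, N, m, n with m ≤ M and n ≤ N, the minimum number of colors needed for an (m,n)-distinguishable 2D color code on the M×N grid satisfies K_{M,N}(m,n) ≤ K_M(m) · K_N(n). -/
/-- The multiset of `m` consecutive elements of `s` starting at `t`. -/
def window {α : Type*} (s : ℕ → α) (m t : ℕ) : Multiset α :=
  (Multiset.range m).map (fun i => s (t + i))

/-- `s` is an `m`-distinguishable (non-cyclic) sequence of length `M`. -/
def IsDist {α : Type*} (M m : ℕ) (s : ℕ → α) : Prop :=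
  ∀ t₁ t₂, t₁ + m ≤ M → t₂ + m ≤ M → window s m t₁ = window s m t₂ → t₁ = t₂

/-- The color multiset of the `m × n` block tagged at `(x₀, y₀)`. -/
def block {α : Type*} (f : ℕ → ℕ → α) (m n x₀ y₀ : ℕ) : Multiset α :=
  (Multiset.range m).bind (fun i => (Multiset.range n).map (fun j => f (x₀ + i) (y₀ + j)))

/-- A 2D color mapping is `(m,n)`-distinguishable on the `M × N` grid. -/
def IsDist2 {α : Type*} (M N m n : ℕ) (f : ℕ → ℕ → α) : Prop :=
  ∀ x₁ y₁ x₂ y₂, x₁ + m ≤ M → y₁ + n ≤ N → x₂ + m ≤ M → y₂ + n ≤ N →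
    block f m n x₁ y₁ = block f m n x₂ y₂ → (x₁, y₁) = (x₂, y₂)

/-- `K_M(m)`: the minimum number of colors admitting an `m`-distinguishable
coloring of the 1D grid `Z_M`. -/
noncomputable def K1 (M m : ℕ) : ℕ := sInf {k | ∃ s : ℕ → Fin k, IsDist M m s}

/-- `K_{M,N}(m,n)`: the minimum number of colors admitting an
`(m,n)`-distinguishable coloring of the grid `Z_M × Z_N`. -/
noncomputable def K2 (M N m n : ℕ) : ℕ :=
  sInf {k | ∃ f : ℕ → ℕ → Fin k, IsDist2 M N m n f}

/-!
Take optimal `m`- and `n`-distinguishable colorings `s` of `Z_M` and `t` of `Z_N` and color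
`(x, y)` by the pair `(s x, t y)`. Projecting the multiset of an `m × n` block to its first
coordinate gives `n` copies of the `m`-window of `s` at `x`, and to its second coordinate `m`
copies of the `n`-window of `t` at `y`. Since multisets are torsion free, equal blocks therefore
have equal windows in both directions, hence equal positions.
-/

theorem Multiset.bind_const {α β : Type*} (s : Multiset α) (t : Multiset β) :
    s.bind (fun _ => t) = Multiset.card s • t := by
  simp [Multiset.bind, Multiset.join]

section Windows

variable {α β : Type*}

theorem map_block (f : ℕ → ℕ → α) (g : α → β) (m n x y : ℕ) :
    (block f m n x y).map g = block (fun i j => g (f i j)) m n x y := by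
  simp only [block, Multiset.map_bind, Multiset.map_map, Function.comp_def]

theorem map_fst_block_prod (s : ℕ → α) (t : ℕ → β) (m n x y : ℕ) :
    (block (fun i j => (s i, t j)) m n x y).map Prod.fst = n • window s m x := by
  rw [map_block]
  dsimp only [block]
  rw [Multiset.bind_map_comm, Multiset.bind_const, Multiset.card_range]
  rfl

theorem map_snd_block_prod (s : ℕ → α) (t : ℕ → β) (m n x y : ℕ) :
    (block (fun i j => (s i, t j)) m n x y).map Prod.snd = m • window t n y := by
  rw [map_block]
  dsimp only [block]
  rw [Multiset.bind_const, Multiset.card_range]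
  rfl

theorem isDist_of_injOn {M m : ℕ} {s : ℕ → α} (hm : 0 < m) (hs : Set.InjOn s (Set.Iio M)) :
    IsDist M m s := by
  have start_le : ∀ t₁ t₂, t₁ + m ≤ M → t₂ + m ≤ M →
      window s m t₁ = window s m t₂ → t₂ ≤ t₁ := by
    intro t₁ t₂ h₁ h₂ hw
    have hmem : s t₁ ∈ window s m t₂ := hw ▸ Multiset.mem_map.2 ⟨0, by simpa using hm, rfl⟩
    obtain ⟨j, hj, hsj⟩ := Multiset.mem_map.1 hmem
    have hjm : j < m := Multiset.mem_range.1 hj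
    have : t₂ + j = t₁ := hs (Set.mem_Iio.2 (by omega)) (Set.mem_Iio.2 (by omega)) hsj
    omega
  intro t₁ t₂ h₁ h₂ hw
  exact le_antisymm (start_le t₂ t₁ h₂ h₁ hw.symm) (start_le t₁ t₂ h₁ h₂ hw)

theorem IsDist.prod {M N m n : ℕ} {s : ℕ → α} {t : ℕ → β} (hm : 0 < m) (hn : 0 < n)
    (hs : IsDist M m s) (ht : IsDist N n t) :
    IsDist2 M N m n (fun x y => (s x, t y)) := by
  intro x₁ y₁ x₂ y₂ hx₁ hy₁ hx₂ hy₂ hb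
  have hfst := congrArg (Multiset.map Prod.fst) hb
  have hsnd := congrArg (Multiset.map Prod.snd) hb
  rw [map_fst_block_prod, map_fst_block_prod] at hfst
  rw [map_snd_block_prod, map_snd_block_prod] at hsnd
  rw [hs x₁ x₂ hx₁ hx₂ (nsmul_right_injective hn.ne' hfst),
    ht y₁ y₂ hy₁ hy₂ (nsmul_right_injective hm.ne' hsnd)]

theorem IsDist2.comp_injective {M N m n : ℕ} {f : ℕ → ℕ → α} {g : α → β}
    (hf : IsDist2 M N m n f) (hg : Function.Injective g) :
    IsDist2 M N m n (fun x y => g (f x y)) := by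
  intro x₁ y₁ x₂ y₂ hx₁ hy₁ hx₂ hy₂ hb
  rw [← map_block, ← map_block] at hb
  exact hf x₁ y₁ x₂ y₂ hx₁ hy₁ hx₂ hy₂ (Multiset.map_injective hg hb)

end Windows

theorem exists_isDist_fin_K1 {M m : ℕ} (hm : 0 < m) :
    ∃ s : ℕ → Fin (K1 M m), IsDist M m s := by
  have hcast : Set.InjOn (fun i : ℕ => Fin.ofNat (M + 1) i) (Set.Iio M) := by
    intro a ha b hb h
    simp only [Set.mem_Iio] at ha hb
    simpa [Fin.ext_iff, Nat.mod_eq_of_lt (Nat.lt_succ_of_lt ha),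
      Nat.mod_eq_of_lt (Nat.lt_succ_of_lt hb)] using h
  have hne : {k | ∃ s : ℕ → Fin k, IsDist M m s}.Nonempty := ⟨M + 1, _, isDist_of_injOn hm hcast⟩
  exact Nat.sInf_mem hne

theorem stmt6_general (M N m n : ℕ) (hm : 0 < m) (hn : 0 < n) :
    K2 M N m n ≤ K1 M m * K1 N n := by
  obtain ⟨s, hs⟩ := exists_isDist_fin_K1 (M := M) hm
  obtain ⟨t, ht⟩ := exists_isDist_fin_K1 (M := N) hn
  refine Nat.sInf_le ?_
  exact ⟨_, (hs.prod hm hn ht).comp_injective finProdFinEquiv.injective⟩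

/-- `K_{M,N}(m,n) ≤ K_M(m) · K_N(n)` for `m ≤ M`, `n ≤ N`. -/
theorem stmt6 (M N m n : ℕ) (hm : 0 < m) (hn : 0 < n) (hmM : m ≤ M) (hnN : n ≤ N) :
    K2 M N m n ≤ K1 M m * K1 N n :=
  stmt6_general M N m n hm hn
end

section
/- Let p be a prime and k a positive integer divisible by p. Then the maximum length of a cyclic p-distinguishable sequence over [k] satisfies M_p^c(k) ≤ C(k+p-1, p) − k/p. -/
/-!
Double count the letter `a` over all `p`-multisets on `k` letters: it occurs
`C(k+p-1, p-1)` times in total, which is `≡ 1 (mod p)` by Lucas' theorem since `p ∣ k`.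
Over the `M` windows of the sequence it occurs `p` times for each of its occurrences in the
sequence, i.e. a multiple of `p` times. Hence every letter lies in some multiset that is not
a window, and since such a multiset covers at most `p` letters, at least `k / p` of the
`C(k+p-1, p)` multisets of size `p` are missing.
-/

/-- The multiset of `m` cyclically consecutive elements (indices mod `M`). -/
def cwindow {α : Type*} (s : ℕ → α) (M m t : ℕ) : Multiset α :=
  (Multiset.range m).map (fun i => s ((t + i) % M))

/-- `s` is a cyclic `m`-distinguishable sequence of length `M`. -/
def IsCyclicDist {α : Type*} (M m : ℕ) (s : ℕ → α) : Prop :=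
  ∀ t₁ t₂, t₁ < M → t₂ < M → cwindow s M m t₁ = cwindow s M m t₂ → t₁ = t₂

open Finset

lemma sum_range_comp_add_mod {β : Type*} [AddCommMonoid β] (g : ℕ → β) (M i : ℕ) :
    ∑ t ∈ range M, g ((t + i) % M) = ∑ t ∈ range M, g t := by
  rcases M.eq_zero_or_pos with rfl | hM
  · simp
  have := NeZero.of_pos hM
  rw [← Fin.sum_univ_eq_sum_range, ← Fin.sum_univ_eq_sum_range]
  refine Fintype.sum_equiv (Equiv.addRight (Fin.ofNat M i)) _ _ fun t => ?_
  simp [Fin.val_add, Nat.add_mod_mod]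

lemma Nat.choose_add_sub_one_modEq_one {p k : ℕ} (hp : p.Prime) (hdvd : p ∣ k) :
    (k + p - 1).choose (p - 1) ≡ 1 [MOD p] := by
  have : Fact p.Prime := ⟨hp⟩
  obtain ⟨j, rfl⟩ := hdvd
  have hlt : p - 1 < p := Nat.sub_lt hp.pos one_pos
  have hn : p * j + p - 1 = p - 1 + p * j := by have := hp.pos; omega
  have hmod : (p * j + p - 1) % p = p - 1 := by
    rw [hn, Nat.add_mul_mod_self_left, Nat.mod_eq_of_lt hlt]
  have hdiv : (p * j + p - 1) / p = j := by
    rw [hn, Nat.add_mul_div_left _ _ hp.pos, Nat.div_eq_of_lt hlt, zero_add]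
  simpa [hmod, hdiv, Nat.mod_eq_of_lt hlt, Nat.div_eq_of_lt hlt] using
    Choose.choose_modEq_choose_mod_mul_choose_div_nat (p := p) (n := p * j + p - 1) (k := p - 1)

namespace Sym

variable {α : Type*} [Fintype α] [DecidableEq α] {p : ℕ}

lemma sum_count_eq_card (m : Sym α p) : ∑ a, Multiset.count a (m : Multiset α) = p :=
  (Multiset.sum_count_eq_card fun a _ => mem_univ a).trans m.2

lemma sum_univ_count_eq_sum_univ_count (a b : α) :
    ∑ m : Sym α p, Multiset.count a (m : Multiset α) =
      ∑ m : Sym α p, Multiset.count b (m : Multiset α) := by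
  refine Fintype.sum_equiv (equivCongr (Equiv.swap a b)) _ _ fun m => ?_
  simp [equivCongr, coe_map, ← Multiset.count_map_eq_count' (Equiv.swap a b) _
    (Equiv.injective _) a]

theorem sum_univ_count_eq_choose (hp : 0 < p) (a : α) :
    ∑ m : Sym α p, Multiset.count a (m : Multiset α) =
      (Fintype.card α + p - 1).choose (p - 1) := by
  obtain ⟨q, rfl⟩ := Nat.exists_eq_add_one_of_ne_zero hp.ne'
  have hn : Fintype.card α + (q + 1) - 1 = Fintype.card α + q := by omega
  rw [hn, Nat.add_sub_cancel]
  refine Nat.eq_of_mul_eq_mul_left (Fintype.card_pos_iff.2 ⟨a⟩) ?_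
  calc Fintype.card α * ∑ m : Sym α (q + 1), Multiset.count a (m : Multiset α)
      = ∑ b : α, ∑ m : Sym α (q + 1), Multiset.count b (m : Multiset α) := by
        simp [sum_univ_count_eq_sum_univ_count _ a]
    _ = (Fintype.card α + q).choose (q + 1) * (q + 1) := by
        rw [sum_comm, Fintype.sum_congr _ _ sum_count_eq_card, sum_const, card_univ,
          card_sym_eq_choose, smul_eq_mul, hn]
    _ = Fintype.card α * (Fintype.card α + q).choose q := by
        rw [Nat.choose_succ_right_eq, Nat.add_sub_cancel, mul_comm]

lemma card_le_mul_card_of_forall_exists_mem (F : Finset (Sym α p))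
    (hF : ∀ a, ∃ m ∈ F, a ∈ m) :
    Fintype.card α ≤ p * #F := by
  calc Fintype.card α = #(univ : Finset α) := card_univ.symm
    _ ≤ #(F.biUnion fun m => (m : Multiset α).toFinset) := card_le_card fun a _ => by
        obtain ⟨m, hm, ha⟩ := hF a
        exact mem_biUnion.2 ⟨m, hm, Multiset.mem_toFinset.2 ha⟩
    _ ≤ ∑ m ∈ F, #(m : Multiset α).toFinset := card_biUnion_le
    _ ≤ ∑ _m ∈ F, p := sum_le_sum fun m _ => (Multiset.toFinset_card_le _).trans m.2.le
    _ = p * #F := by rw [sum_const, smul_eq_mul, mul_comm]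

theorem exists_mem_compl_of_dvd_sum_count (hp : p.Prime) (hdvd : p ∣ Fintype.card α)
    (W : Finset (Sym α p)) (hW : ∀ a, p ∣ ∑ m ∈ W, Multiset.count a (m : Multiset α))
    (a : α) :
    ∃ m ∈ Wᶜ, a ∈ m := by
  by_contra! h
  have hcompl : ∑ m ∈ Wᶜ, Multiset.count a (m : Multiset α) = 0 :=
    sum_eq_zero fun m hm => Multiset.count_eq_zero.2 (h m hm)
  have htotal := sum_univ_count_eq_choose hp.pos a
  rw [← sum_add_sum_compl W, hcompl, add_zero] at htotal
  have hone := Nat.choose_add_sub_one_modEq_one hp hdvd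
  exact hp.not_dvd_one ((hone.dvd_iff dvd_rfl).1 (htotal ▸ hW a))

end Sym

section CyclicWindow

variable {α : Type*} [DecidableEq α]

def cwindowSym (s : ℕ → α) (M p t : ℕ) : Sym α p :=
  ⟨cwindow s M p t, by simp [cwindow]⟩

lemma count_cwindow (s : ℕ → α) (M m t : ℕ) (a : α) :
    (cwindow s M m t).count a = ∑ i ∈ range m, if s ((t + i) % M) = a then 1 else 0 := by
  simp only [cwindow, Multiset.count_map, sum_boole, eq_comm (a := a)]
  rfl

lemma sum_count_cwindow (s : ℕ → α) (M m : ℕ) (a : α) :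
    ∑ t ∈ range M, (cwindow s M m t).count a = m * #{t ∈ range M | s t = a} := by
  simp_rw [count_cwindow]
  rw [sum_comm]
  simp_rw [sum_range_comp_add_mod (fun j => if s j = a then 1 else 0)]
  simp [sum_boole]

end CyclicWindow

theorem stmt7_general (p k M : ℕ) (hp : p.Prime) (hdvd : p ∣ k)
    (s : ℕ → Fin k) (hS : IsCyclicDist M p s) :
    M ≤ (k + p - 1).choose p - k / p := by
  set W := (range M).image (cwindowSym s M p)
  have hinj : Set.InjOn (cwindowSym s M p) (range M) := fun t₁ h₁ t₂ h₂ h =>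
    hS t₁ t₂ (mem_range.1 h₁) (mem_range.1 h₂) (congrArg Subtype.val h)
  have hW : ∀ a, p ∣ ∑ m ∈ W, Multiset.count a (m : Multiset (Fin k)) := fun a => by
    rw [sum_image hinj]
    exact ⟨_, sum_count_cwindow s M p a⟩
  have hmissing : k ≤ p * #Wᶜ := by
    simpa using Sym.card_le_mul_card_of_forall_exists_mem Wᶜ
      (Sym.exists_mem_compl_of_dvd_sum_count hp (by simpa using hdvd) W hW)
  have hcard : M + #Wᶜ = (k + p - 1).choose p := by
    rw [← card_range M, ← card_image_of_injOn hinj, card_add_card_compl, Sym.card_sym_eq_choose,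
      Fintype.card_fin]
  have := Nat.div_le_of_le_mul hmissing
  omega

/-- If `p` is prime and `p ∣ k`, then any cyclic `p`-distinguishable sequence
over `[k]` has length at most `C(k+p-1, p) - k/p`; i.e.
`M_p^c(k) ≤ C(k+p-1, p) - k/p`. -/
theorem stmt7 (p k M : ℕ) (hp : p.Prime) (hk : 0 < k) (hdvd : p ∣ k)
    (s : ℕ → Fin k) (hS : IsCyclicDist M p s) :
    M ≤ (k + p - 1).choose p - k / p :=
  stmt7_general p k M hp hdvd s hS
end

section
/- Let p be a prime, k divisible by p, and fix a color a ∈ [k]. Then the total number of occurrences of a, counted with multiplicity, over all multisets of size p from [k] that contain at least one a, is not divisible by p. -/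
/-!
Removing one occurrence of `a` matches the multisets of size `n + 1` containing `a` with all
multisets of size `n`, so `∑_{|A| = n+1} φ_a(A) = ∑_{|B| = n} (φ_a(B) + 1)`, whence
`∑_{|A| = n+1} φ_a(A) = C(k + n, n)` for `k` colours. For `n + 1 = p` and `k = p m` this is
`C(p m + (p - 1), p - 1)`, which is `C(p - 1, p - 1) · C(m, 0) = 1` modulo `p` by Lucas' theorem.
-/

namespace Sym

variable {α : Type*} [Fintype α] [DecidableEq α]

theorem sum_filter_mem_count (a : α) (n : ℕ) :
    ∑ A ∈ Finset.univ.filter (fun A : Sym α n => a ∈ A), Multiset.count a (A : Multiset α) =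
      ∑ A : Sym α n, Multiset.count a (A : Multiset α) :=
  Finset.sum_filter_of_ne fun A _ h => by
    rwa [← Sym.mem_coe, ← Multiset.count_pos, Nat.pos_iff_ne_zero]

theorem sum_count_succ (a : α) (n : ℕ) :
    ∑ A : Sym α (n + 1), Multiset.count a (A : Multiset α) =
      ∑ B : Sym α n, Multiset.count a (B : Multiset α) + Fintype.card (Sym α n) := by
  rw [← sum_filter_mem_count, Finset.card_univ.symm.trans (Finset.card_eq_sum_ones _),
    ← Finset.sum_add_distrib]
  refine Finset.sum_bij' (fun A hA => A.erase a (Finset.mem_filter.mp hA).2)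
    (fun B _ => a ::ₛ B) (fun _ _ => Finset.mem_univ _)
    (fun B _ => Finset.mem_filter.mpr ⟨Finset.mem_univ _, mem_cons_self a B⟩)
    (fun _ _ => cons_erase _) (fun B _ => erase_cons_head B a) fun A hA => ?_
  conv_lhs => rw [← cons_erase (Finset.mem_filter.mp hA).2]
  rw [coe_cons, Multiset.count_cons_self]

theorem sum_count_succ_eq_choose (a : α) (n : ℕ) :
    ∑ A : Sym α (n + 1), Multiset.count a (A : Multiset α) =
      (Fintype.card α + n).choose n := by
  induction n with
  | zero =>
    rw [sum_count_succ, Finset.sum_eq_zero fun B _ => by simp [eq_nil_of_card_zero B]]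
    simp
  | succ n ih =>
    rw [sum_count_succ, ih, card_sym_eq_choose, Nat.add_succ_sub_one, ← Nat.add_assoc,
      Nat.choose_succ_succ']

end Sym

theorem Nat.choose_mul_add_pred_modEq_one {p : ℕ} [Fact p.Prime] (m : ℕ) :
    (p * m + (p - 1)).choose (p - 1) ≡ 1 [MOD p] := by
  have hp := (Fact.out : p.Prime).pos
  have hmod : (p * m + (p - 1)) % p = p - 1 := by
    rw [Nat.mul_add_mod, Nat.mod_eq_of_lt (by omega)]
  have hdiv : (p * m + (p - 1)) / p = m := by
    rw [Nat.mul_add_div hp, Nat.div_eq_of_lt (by omega), Nat.add_zero]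
  have hlt : p - 1 < p := Nat.sub_lt hp one_pos
  have lucas := Choose.choose_modEq_choose_mod_mul_choose_div_nat (p := p)
    (n := p * m + (p - 1)) (k := p - 1)
  rwa [hmod, hdiv, Nat.mod_eq_of_lt hlt, Nat.div_eq_of_lt hlt, Nat.choose_self,
    Nat.choose_zero_right, Nat.mul_one] at lucas

theorem stmt8_general (p k : ℕ) (hp : p.Prime) (hdvd : p ∣ k) (a : Fin k) :
    ¬ (p ∣ ∑ A ∈ Finset.univ.filter (fun A : Sym (Fin k) p => a ∈ A),
        Multiset.count a (A : Multiset (Fin k))) := by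
  have : Fact p.Prime := ⟨hp⟩
  obtain ⟨m, rfl⟩ := hdvd
  obtain ⟨n, rfl⟩ : ∃ n, p = n + 1 := Nat.exists_eq_add_one.mpr hp.pos
  rw [Sym.sum_filter_mem_count, Sym.sum_count_succ_eq_choose, Fintype.card_fin,
    ← Nat.modEq_zero_iff_dvd]
  intro h
  have hzero_one := h.symm.trans (Nat.choose_mul_add_pred_modEq_one (p := n + 1) m)
  simp [Nat.ModEq, Nat.mod_eq_of_lt hp.one_lt] at hzero_one

/-- Let `p` be a prime, `k` divisible by `p`, and `a` a color in `[k]`. The total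
number of occurrences of `a`, counted with multiplicity, over all multisets of
size `p` from `[k]` containing at least one `a`, is not divisible by `p`. -/
theorem stmt8 (p k : ℕ) (hp : p.Prime) (hk : 0 < k) (hdvd : p ∣ k) (a : Fin k) :
    ¬ (p ∣ ∑ A ∈ Finset.univ.filter (fun A : Sym (Fin k) p => a ∈ A),
        Multiset.count a (A : Multiset (Fin k))) :=
  stmt8_general p k hp hdvd a
end

section
/- For a prime p and positive integer k, k divides C(k+p-1, p) if and only if p does not divide k. -/
/-- For a prime `p` and a positive integer `k`, `k` divides `C(k+p-1, p)` if and
only if `p` does not divide `k`. -/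
theorem stmt13 (p k : ℕ) (hp : p.Prime) (hk : 0 < k) :
    k ∣ (k + p - 1).choose p ↔ ¬ (p ∣ k) := by
  haveI : Fact p.Prime := ⟨hp⟩
  have hp2 : 2 ≤ p := hp.two_le
  set n := k + p - 1 with hn'
  -- key identity: C(n,p) * p = C(n,p-1) * k
  have key : n.choose p * p = n.choose (p - 1) * k := by
    have := Nat.choose_succ_right_eq n (p - 1)
    have h1 : p - 1 + 1 = p := by omega
    rw [h1] at this
    rw [this]
    congr 1
    omega
  have step : k ∣ n.choose p ↔ p ∣ n.choose (p - 1) := by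
    constructor
    · rintro ⟨t, ht⟩
      refine ⟨t, Nat.eq_of_mul_eq_mul_left hk ?_⟩
      calc k * n.choose (p - 1) = n.choose (p - 1) * k := by ring
        _ = n.choose p * p := key.symm
        _ = (k * t) * p := by rw [ht]
        _ = k * (p * t) := by ring
    · rintro ⟨t, ht⟩
      refine ⟨t, Nat.eq_of_mul_eq_mul_left (show 0 < p by omega) ?_⟩
      calc p * n.choose p = n.choose p * p := by ring
        _ = n.choose (p - 1) * k := key
        _ = (p * t) * k := by rw [ht]
        _ = p * (k * t) := by ring
  rw [step]
  -- Lucas step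
  have lucas := @Choose.choose_modEq_choose_mod_mul_choose_div_nat n (p - 1) p _
  have h2 : (p - 1) % p = p - 1 := Nat.mod_eq_of_lt (by omega)
  have h3 : (p - 1) / p = 0 := Nat.div_eq_of_lt (by omega)
  rw [h2, h3, Nat.choose_zero_right, mul_one] at lucas
  have hdvd : p ∣ n.choose (p - 1) ↔ p ∣ (n % p).choose (p - 1) := by
    constructor <;> intro h
    · exact (Nat.modEq_zero_iff_dvd).mp ((lucas.symm.trans (Nat.modEq_zero_iff_dvd.mpr h)))
    · exact (Nat.modEq_zero_iff_dvd).mp ((lucas.trans (Nat.modEq_zero_iff_dvd.mpr h)))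
  rw [hdvd]
  have hmod : n % p = (k - 1) % p := by
    have : n = k - 1 + p := by omega
    rw [this, Nat.add_mod_right]
  rw [hmod]
  constructor
  · intro h hpk
    have : (k - 1) % p = p - 1 := by
      obtain ⟨m, rfl⟩ := hpk
      rcases Nat.eq_zero_or_pos m with rfl | hm
      · simp at hk
      have h4 : p * m = p * (m - 1) + p := by
        conv_lhs => rw [← Nat.succ_pred_eq_of_pos hm]
        rw [Nat.mul_succ, Nat.pred_eq_sub_one]
      have h5 : p * m - 1 = p * (m - 1) + (p - 1) := by omega
      rw [h5, Nat.mul_add_mod, Nat.mod_eq_of_lt (by omega)]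
    rw [this, Nat.choose_self, Nat.dvd_one] at h
    omega
  · intro hpk
    have hlt : (k - 1) % p < p - 1 := by
      have h1 : (k - 1) % p < p := Nat.mod_lt _ (by omega)
      rcases Nat.lt_or_ge ((k - 1) % p) (p - 1) with h | h
      · exact h
      · exfalso
        have heq : (k - 1) % p = p - 1 := by omega
        apply hpk
        apply Nat.dvd_of_mod_eq_zero
        have hk1 : k = (k - 1) + 1 := by omega
        rw [hk1, Nat.add_mod, heq]
        simp [Nat.sub_add_cancel (show 1 ≤ p by omega)]
    rw [Nat.choose_eq_zero_of_lt hlt]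
    exact dvd_zero p
end

section
/- Let S be a cyclic m_1-distinguishable sequence of length M_1 over color set [k_1], and T a cyclic m_2-distinguishable sequence of length M_2 over a disjoint color set of size k_2. Suppose m_1 | M_1, m_2 | M_2, d = gcd(M_1/m_1, M_2/m_2) ≥ 2, and gcd(d, M_i/(m_i d)) = 1 for i = 1,2. Divide S into M_1/m_1 consecutive blocks α_0,...,α_{M_1/m_1 - 1} of length m_1 and T into M_2/m_2 blocks β_0,...,β_{M_2/m_2 - 1} of length m_2. Then the interleaved sequence S×T = α_0 β_0 α_1 β_1 ... α_{L-1} β_{L-1}, with block indices taken modulo M_1/m_1 and M_2/m_2 respectively and L = lcm(M_1/m_1, M_2/m_2), is a cyclic (m_1+m_2)-distinguishable sequence of length (m_1+m_2)L = (M_1 M_2 / d)(1/m_1 + 1/m_2) over k_1 + k_2 colors. -/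
/-- The cross product `S × T`: the `q`-th element belongs to the `q/(m₁+m₂)`-th
pair of an `α`-word (a length-`m₁` block of `S`) followed by a `β`-word
(a length-`m₂` block of `T`), with block indices taken cyclically. -/
def crossProd {k₁ k₂ : ℕ} (S : ℕ → Fin k₁) (T : ℕ → Fin k₂)
    (M₁ M₂ m₁ m₂ : ℕ) : ℕ → (Fin k₁ ⊕ Fin k₂) := fun q =>
  if q % (m₁ + m₂) < m₁ then
    Sum.inl (S ((q / (m₁ + m₂) * m₁ + q % (m₁ + m₂)) % M₁))
  else
    Sum.inr (T ((q / (m₁ + m₂) * m₂ + (q % (m₁ + m₂) - m₁)) % M₂))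

/-!
A window of `S × T` of length `m₁ + m₂` is a window of `S` of length `m₁` together with a
window of `T` of length `m₂`; since the colour sets are disjoint, two equal windows of `S × T`
have equal `S`-parts and equal `T`-parts, hence congruent starting points modulo `M₁` and `M₂`.
For the window at offset `r` in the `j`-th block pair these starting points are
`j m₁ + min r m₁` and `j m₂ + (r - m₁)`. With `nᵢ = Mᵢ / mᵢ`, the `T`-congruence gives
`j₁ ≡ j₂ [MOD n₂]` and equal offsets into the `β`-blocks, the `S`-congruence gives
`j₁ ≡ j₂ [MOD n₁]`, so `j₁ = j₂` as both are below `lcm n₁ n₂`. The exception is a window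
starting inside an `α`-block and one starting inside a `β`-block: the `S`-part of the latter
begins at the next `α`-block, so the `S`-congruence reads `j₁ ≡ j₂ + 1 [MOD n₁]`, which together
with `j₁ ≡ j₂ [MOD n₂]` is impossible modulo `gcd n₁ n₂ ≥ 2`.
-/

namespace Multiset

theorem filterMap_getLeft?_disjSum {α β : Type*} (s : Multiset α) (t : Multiset β) :
    (s.disjSum t).filterMap Sum.getLeft? = s := by
  simp [disjSum, filterMap_map, Function.comp_def, eq_zero_iff_forall_notMem]

theorem filterMap_getRight?_disjSum {α β : Type*} (s : Multiset α) (t : Multiset β) :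
    (s.disjSum t).filterMap Sum.getRight? = t := by
  simp [disjSum, filterMap_map, Function.comp_def, eq_zero_iff_forall_notMem]

theorem disjSum_inj {α β : Type*} {s₁ s₂ : Multiset α} {t₁ t₂ : Multiset β} :
    s₁.disjSum t₁ = s₂.disjSum t₂ ↔ s₁ = s₂ ∧ t₁ = t₂ := by
  refine ⟨fun h => ⟨?_, ?_⟩, fun ⟨hs, ht⟩ => hs ▸ ht ▸ rfl⟩
  · simpa only [filterMap_getLeft?_disjSum] using congrArg (filterMap Sum.getLeft?) h
  · simpa only [filterMap_getRight?_disjSum] using congrArg (filterMap Sum.getRight?) h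

theorem map_range_rotate {α : Type*} (f : ℕ → α) {n b : ℕ} (B : ℕ) (hb : b ≤ n) :
    (range n).map (fun i => f (B + b + i)) =
      (range n).map (fun c => f (B + c + if c < b then n else 0)) := by
  obtain ⟨k, rfl⟩ := Nat.exists_eq_add_of_le hb
  conv_lhs => rw [add_comm b k, range_add]
  rw [range_add, map_add, map_add, map_map, map_map, add_comm]
  congr 1 <;> refine map_congr rfl fun c hc => ?_ <;> rw [mem_range] at hc
  all_goals simp only [Function.comp_apply]
  · rw [if_pos hc]; congr 1; omega
  · rw [if_neg (by omega)]; congr 1; omega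

end Multiset

namespace Nat

theorem ModEq.modEq_and_eq_of_mul_add {m n j₁ j₂ b₁ b₂ : ℕ} (hb₁ : b₁ < m) (hb₂ : b₂ < m)
    (h : j₁ * m + b₁ ≡ j₂ * m + b₂ [MOD m * n]) : j₁ ≡ j₂ [MOD n] ∧ b₁ = b₂ := by
  have hb : b₁ = b₂ := by
    have h' : (j₁ * m + b₁) % m = (j₂ * m + b₂) % m := h.of_mul_right n
    rwa [mul_add_mod_self_right, mul_add_mod_self_right, mod_eq_of_lt hb₁,
      mod_eq_of_lt hb₂] at h'
  subst hb
  refine ⟨ModEq.mul_right_cancel' (by omega : m ≠ 0) ?_, rfl⟩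
  rw [mul_comm n m]
  exact h.add_right_cancel' b₁

theorem not_modEq_add_one_of_modEq {n₁ n₂ x y : ℕ} (hd : 2 ≤ gcd n₁ n₂)
    (h₂ : x ≡ y [MOD n₂]) : ¬ x ≡ y + 1 [MOD n₁] := by
  intro h₁
  have hy : y ≡ y + 1 [MOD gcd n₁ n₂] :=
    (h₂.of_dvd (gcd_dvd_right n₁ n₂)).symm.trans (h₁.of_dvd (gcd_dvd_left n₁ n₂))
  have := le_of_dvd one_pos (by simpa using (modEq_iff_dvd' (le_succ y)).mp hy)
  omega

end Nat

theorem cwindow_mod {α : Type*} (s : ℕ → α) (M m t : ℕ) :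
    cwindow s M m (t % M) = cwindow s M m t := by
  simp only [cwindow, Nat.mod_add_mod]

theorem IsCyclicDist.modEq_of_cwindow_eq {α : Type*} {M m : ℕ} {s : ℕ → α}
    (hs : IsCyclicDist M m s) (hM : 0 < M) {t₁ t₂ : ℕ}
    (h : cwindow s M m t₁ = cwindow s M m t₂) : t₁ ≡ t₂ [MOD M] :=
  hs _ _ (Nat.mod_lt _ hM) (Nat.mod_lt _ hM) (by rwa [cwindow_mod, cwindow_mod])

section crossProd

variable {k₁ k₂ : ℕ} (S : ℕ → Fin k₁) (T : ℕ → Fin k₂) {M₁ M₂ m₁ m₂ : ℕ}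

theorem crossProd_periodic {L : ℕ} (h₁ : M₁ ∣ m₁ * L) (h₂ : M₂ ∣ m₂ * L) :
    Function.Periodic (crossProd S T M₁ M₂ m₁ m₂) ((m₁ + m₂) * L) := by
  intro q
  rcases (m₁ + m₂).eq_zero_or_pos with hm | hm
  · simp [hm]
  have shift : ∀ {M m : ℕ}, M ∣ m * L → ∀ a c, ((a + L) * m + c) % M = (a * m + c) % M := by
    rintro M m ⟨e, he⟩ a c
    rw [add_mul, add_right_comm, mul_comm L, he, Nat.add_mul_mod_self_left]
  simp only [crossProd, Nat.add_mul_mod_self_left, Nat.add_mul_div_left _ _ hm, shift h₁, shift h₂]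

theorem crossProd_mul_add_left (j : ℕ) {c : ℕ} (hc : c < m₁) :
    crossProd S T M₁ M₂ m₁ m₂ (j * (m₁ + m₂) + c) = .inl (S ((j * m₁ + c) % M₁)) := by
  have hc' : c < m₁ + m₂ := by omega
  simp [crossProd, Nat.mod_eq_of_lt hc', mul_comm j,
    Nat.mul_add_div (show 0 < m₁ + m₂ by omega), Nat.div_eq_of_lt hc', hc]

theorem crossProd_mul_add_right (j : ℕ) {c : ℕ} (hc : c < m₂) :
    crossProd S T M₁ M₂ m₁ m₂ (j * (m₁ + m₂) + (m₁ + c)) = .inr (T ((j * m₂ + c) % M₂)) := by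
  have hc' : m₁ + c < m₁ + m₂ := by omega
  simp [crossProd, Nat.mod_eq_of_lt hc', mul_comm j,
    Nat.mul_add_div (show 0 < m₁ + m₂ by omega), Nat.div_eq_of_lt hc']

theorem cwindow_crossProd {L : ℕ} (h₁ : M₁ ∣ m₁ * L) (h₂ : M₂ ∣ m₂ * L) (j : ℕ) {r : ℕ}
    (hr : r < m₁ + m₂) :
    cwindow (crossProd S T M₁ M₂ m₁ m₂) ((m₁ + m₂) * L) (m₁ + m₂) (j * (m₁ + m₂) + r) =
      (cwindow S M₁ m₁ (j * m₁ + min r m₁)).disjSum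
        (cwindow T M₂ m₂ (j * m₂ + (r - m₁))) := by
  simp only [cwindow, (crossProd_periodic S T h₁ h₂).map_mod_nat]
  rw [Multiset.map_range_rotate _ _ hr.le,
    Multiset.map_range_rotate (fun x => S (x % M₁)) _ (min_le_right r m₁),
    Multiset.map_range_rotate (fun x => T (x % M₂)) _ (show r - m₁ ≤ m₂ by omega),
    Multiset.range_add, Multiset.map_add, Multiset.disjSum, Multiset.map_map, Multiset.map_map,
    Multiset.map_map]
  congr 1 <;> refine Multiset.map_congr rfl fun c hc => ?_ <;>
    simp only [Multiset.mem_range, Function.comp_apply] at hc ⊢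
  · by_cases hcr : c < r
    · rw [if_pos hcr, if_pos (lt_min hcr hc), add_right_comm, ← add_one_mul,
        crossProd_mul_add_left S T _ hc, add_right_comm, ← add_one_mul]
    · rw [if_neg hcr, if_neg (fun h => hcr (h.trans_le (min_le_left _ _))), add_zero, add_zero,
        crossProd_mul_add_left S T _ hc]
  · by_cases hcr : m₁ + c < r
    · rw [if_pos hcr, if_pos (by omega), add_right_comm, ← add_one_mul,
        crossProd_mul_add_right S T _ hc, add_right_comm, ← add_one_mul]
    · rw [if_neg hcr, if_neg (by omega), add_zero, add_zero, crossProd_mul_add_right S T _ hc]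

end crossProd

theorem eq_of_crossProd_starts_modEq {m₁ m₂ n₁ n₂ j₁ j₂ r₁ r₂ : ℕ} (hm₁ : 0 < m₁) (hm₂ : 0 < m₂)
    (hd : 2 ≤ Nat.gcd n₁ n₂) (hr₁ : r₁ < m₁ + m₂) (hr₂ : r₂ < m₁ + m₂)
    (hj₁ : j₁ < Nat.lcm n₁ n₂) (hj₂ : j₂ < Nat.lcm n₁ n₂)
    (hS : j₁ * m₁ + min r₁ m₁ ≡ j₂ * m₁ + min r₂ m₁ [MOD m₁ * n₁])
    (hT : j₁ * m₂ + (r₁ - m₁) ≡ j₂ * m₂ + (r₂ - m₁) [MOD m₂ * n₂]) :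
    j₁ = j₂ ∧ r₁ = r₂ := by
  wlog hr : r₁ ≤ r₂ generalizing j₁ j₂ r₁ r₂
  · exact (this hr₂ hr₁ hj₂ hj₁ hS.symm hT.symm (by omega)).imp Eq.symm Eq.symm
  obtain ⟨hjn₂, hb⟩ := hT.modEq_and_eq_of_mul_add (by omega) (by omega)
  have hj_eq : j₁ ≡ j₂ [MOD n₁] → j₁ = j₂ := fun h =>
    (Nat.mod_lcm h hjn₂).eq_of_lt_of_lt hj₁ hj₂
  rcases lt_or_ge r₂ m₁ with h₂ | h₂
  · rw [min_eq_left (by omega), min_eq_left h₂.le] at hS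
    obtain ⟨hjn₁, ha⟩ := hS.modEq_and_eq_of_mul_add (by omega) h₂
    exact ⟨hj_eq hjn₁, ha⟩
  rw [min_eq_right h₂, ← add_one_mul, ← add_zero ((j₂ + 1) * m₁)] at hS
  rcases lt_or_ge r₁ m₁ with h₁ | h₁
  · obtain ⟨hjn₁, -⟩ := hS.modEq_and_eq_of_mul_add (min_lt_of_left_lt h₁) hm₁
    exact absurd hjn₁ (Nat.not_modEq_add_one_of_modEq hd hjn₂)
  · rw [min_eq_right h₁, ← add_one_mul, ← add_zero ((j₁ + 1) * m₁)] at hS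
    obtain ⟨hjn₁, -⟩ := hS.modEq_and_eq_of_mul_add hm₁ hm₁
    exact ⟨hj_eq (Nat.ModEq.add_right_cancel' 1 hjn₁), by omega⟩

theorem IsCyclicDist.crossProd {k₁ k₂ M₁ M₂ m₁ m₂ n₁ n₂ : ℕ} {S : ℕ → Fin k₁} {T : ℕ → Fin k₂}
    (hm₁ : 0 < m₁) (hm₂ : 0 < m₂) (hM₁ : M₁ = m₁ * n₁) (hM₂ : M₂ = m₂ * n₂)
    (hd : 2 ≤ Nat.gcd n₁ n₂) (hS : IsCyclicDist M₁ m₁ S) (hT : IsCyclicDist M₂ m₂ T) :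
    IsCyclicDist ((m₁ + m₂) * Nat.lcm n₁ n₂) (m₁ + m₂) (crossProd S T M₁ M₂ m₁ m₂) := by
  intro t₁ t₂ ht₁ ht₂ h
  have hL : 0 < Nat.lcm n₁ n₂ := Nat.pos_of_mul_pos_left (Nat.zero_lt_of_lt ht₁)
  have hn₁ : 0 < n₁ := Nat.pos_of_ne_zero fun h => by simp [h] at hL
  have hn₂ : 0 < n₂ := Nat.pos_of_ne_zero fun h => by simp [h] at hL
  have hdvd₁ : M₁ ∣ m₁ * Nat.lcm n₁ n₂ := hM₁ ▸ mul_dvd_mul_left m₁ (Nat.dvd_lcm_left n₁ n₂)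
  have hdvd₂ : M₂ ∣ m₂ * Nat.lcm n₁ n₂ := hM₂ ▸ mul_dvd_mul_left m₂ (Nat.dvd_lcm_right n₁ n₂)
  rw [← Nat.div_add_mod' t₁ (m₁ + m₂), ← Nat.div_add_mod' t₂ (m₁ + m₂),
    cwindow_crossProd S T hdvd₁ hdvd₂ _ (Nat.mod_lt _ (by omega)),
    cwindow_crossProd S T hdvd₁ hdvd₂ _ (Nat.mod_lt _ (by omega)), Multiset.disjSum_inj] at h
  have hstarts := eq_of_crossProd_starts_modEq hm₁ hm₂ hd (Nat.mod_lt t₁ (by omega))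
    (Nat.mod_lt t₂ (by omega)) (Nat.div_lt_of_lt_mul ht₁) (Nat.div_lt_of_lt_mul ht₂)
    (hM₁ ▸ hS.modEq_of_cwindow_eq (hM₁ ▸ Nat.mul_pos hm₁ hn₁) h.1)
    (hM₂ ▸ hT.modEq_of_cwindow_eq (hM₂ ▸ Nat.mul_pos hm₂ hn₂) h.2)
  rw [← Nat.div_add_mod' t₁ (m₁ + m₂), ← Nat.div_add_mod' t₂ (m₁ + m₂), hstarts.1, hstarts.2]

theorem stmt14_general {k₁ k₂ : ℕ} (M₁ M₂ m₁ m₂ d : ℕ)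
    (hdvd₁ : m₁ ∣ M₁) (hdvd₂ : m₂ ∣ M₂)
    (hd : d = Nat.gcd (M₁ / m₁) (M₂ / m₂)) (hd2 : 2 ≤ d)
    (S : ℕ → Fin k₁) (T : ℕ → Fin k₂)
    (hS : IsCyclicDist M₁ m₁ S) (hT : IsCyclicDist M₂ m₂ T) :
    IsCyclicDist ((m₁ + m₂) * Nat.lcm (M₁ / m₁) (M₂ / m₂)) (m₁ + m₂)
      (crossProd S T M₁ M₂ m₁ m₂) ∧
    (m₁ + m₂) * Nat.lcm (M₁ / m₁) (M₂ / m₂) * (m₁ * m₂ * d) =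
      M₁ * M₂ * (m₁ + m₂) := by
  have hM₁ : m₁ * (M₁ / m₁) = M₁ := Nat.mul_div_cancel' hdvd₁
  have hM₂ : m₂ * (M₂ / m₂) = M₂ := Nat.mul_div_cancel' hdvd₂
  subst hd
  refine ⟨fun t₁ t₂ ht₁ ↦ ?_, ?_⟩
  · -- `M / 0 = 0`, so a nonempty cross product forces `0 < m₁` and `0 < m₂`
    have hm₁ : 0 < m₁ := Nat.pos_of_ne_zero fun h => by simp [h] at ht₁
    have hm₂ : 0 < m₂ := Nat.pos_of_ne_zero fun h => by simp [h] at ht₁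
    exact IsCyclicDist.crossProd hm₁ hm₂ hM₁.symm hM₂.symm hd2 hS hT t₁ t₂ ht₁
  · generalize M₁ / m₁ = n₁ at hM₁ ⊢
    generalize M₂ / m₂ = n₂ at hM₂ ⊢
    rw [← hM₁, ← hM₂]
    linear_combination (m₁ + m₂) * m₁ * m₂ * Nat.gcd_mul_lcm n₁ n₂

/-- Synthetic construction: if `S` is cyclic `m₁`-distinguishable of length `M₁`
over `k₁` colors, `T` is cyclic `m₂`-distinguishable of length `M₂` over a
disjoint set of `k₂` colors, `mᵢ ∣ Mᵢ`, `d = gcd(M₁/m₁, M₂/m₂) ≥ 2` and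
`gcd(d, Mᵢ/(mᵢ d)) = 1`, then the interleaved sequence `S × T` is a cyclic
`(m₁+m₂)`-distinguishable sequence (over `k₁ + k₂` colors) of length
`(m₁+m₂)·lcm(M₁/m₁, M₂/m₂) = (M₁M₂/d)(1/m₁ + 1/m₂)`. -/
theorem stmt14 {k₁ k₂ : ℕ} (M₁ M₂ m₁ m₂ d : ℕ)
    (hm₁ : 0 < m₁) (hm₂ : 0 < m₂)
    (hdvd₁ : m₁ ∣ M₁) (hdvd₂ : m₂ ∣ M₂)
    (hd : d = Nat.gcd (M₁ / m₁) (M₂ / m₂)) (hd2 : 2 ≤ d)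
    (hcop₁ : Nat.gcd d (M₁ / (m₁ * d)) = 1)
    (hcop₂ : Nat.gcd d (M₂ / (m₂ * d)) = 1)
    (S : ℕ → Fin k₁) (T : ℕ → Fin k₂)
    (hS : IsCyclicDist M₁ m₁ S) (hT : IsCyclicDist M₂ m₂ T) :
    IsCyclicDist ((m₁ + m₂) * Nat.lcm (M₁ / m₁) (M₂ / m₂)) (m₁ + m₂)
      (crossProd S T M₁ M₂ m₁ m₂) ∧
    (m₁ + m₂) * Nat.lcm (M₁ / m₁) (M₂ / m₂) * (m₁ * m₂ * d) =
      M₁ * M₂ * (m₁ + m₂) :=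
  stmt14_general M₁ M₂ m₁ m₂ d hdvd₁ hdvd₂ hd hd2 S T hS hT
end

section
/- For every fixed m ≥ 1, M_m^c(k) = Θ(k^m) as k → ∞; that is, there exist constants c_1, c_2 > 0 and k_0 such that c_1 k^m ≤ M_m^c(k) ≤ c_2 k^m for all k ≥ k_0. -/
/-- `M_m^c(k)`: the maximum length of a cyclic `m`-distinguishable sequence
over `k` colors. -/
noncomputable def Mc (m k : ℕ) : ℕ :=
  sSup {M | ∃ s : ℕ → Fin k, IsCyclicDist M m s}

/-!
Upper bound: the `M` windows of a cyclic `m`-distinguishable sequence over `[k]` are pairwise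
distinct `m`-multisets, so `M ≤ C(k + m - 1, m) ≤ (2k)^m`.

Lower bound: for even `q`, write positions as `x = m b + i` with `i < m` and `b < q^m`, and let
`x` carry the letter `(i, i-th base-q digit of b, parity of b)`: this uses `2mq` letters.
The window starting at `m j + a` holds exactly one letter of each class `i`, taken from block `j`
if `a ≤ i` and from block `j + 1` (mod `q^m`) if `i < a`. Since `q^m` is even, the parities locate
`a`; the classes `i ≥ a` then give the high digits of `j` and the classes `i < a` the low digits of
`j + 1`. Choosing `q ≈ k / (2m)` gives a sequence of length `m q^m ≥ k^m / (4m)^m`.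
-/

open Finset

section Transfer

variable {α β : Type*} {M m : ℕ} {s : ℕ → α}

lemma cwindow_comp (f : α → β) (s : ℕ → α) (M m t : ℕ) :
    cwindow (f ∘ s) M m t = (cwindow s M m t).map f := by
  simp only [cwindow, Multiset.map_map, Function.comp_def]

lemma card_cwindow (s : ℕ → α) (M m t : ℕ) : Multiset.card (cwindow s M m t) = m := by
  simp [cwindow]

lemma IsCyclicDist.comp (h : IsCyclicDist M m s) {f : α → β} (hf : Function.Injective f) :
    IsCyclicDist M m (f ∘ s) := fun t₁ t₂ h₁ h₂ hw =>
  h t₁ t₂ h₁ h₂ (Multiset.map_injective hf (by simpa only [cwindow_comp] using hw))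

lemma IsCyclicDist.of_comp {f : α → β} (h : IsCyclicDist M m (f ∘ s)) : IsCyclicDist M m s :=
  fun t₁ t₂ h₁ h₂ hw => h t₁ t₂ h₁ h₂ (by rw [cwindow_comp, cwindow_comp, hw])

lemma IsCyclicDist.le_multichoose [Fintype α] (h : IsCyclicDist M m s) :
    M ≤ (Fintype.card α).multichoose m := by
  classical
  let window : Fin M → Sym α m := fun t => ⟨cwindow s M m t, card_cwindow s M m t⟩
  have hinj : Function.Injective window := fun a b hab =>
    Fin.ext (h a b a.isLt b.isLt (congrArg Sym.toMultiset hab))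
  simpa [← Sym.card_sym_eq_multichoose] using Fintype.card_le_of_injective window hinj

end Transfer

lemma bddAbove_cyclicDist_lengths (m k : ℕ) :
    BddAbove {M | ∃ s : ℕ → Fin k, IsCyclicDist M m s} :=
  ⟨k.multichoose m, fun M ⟨_, hs⟩ => by simpa using hs.le_multichoose⟩

lemma Mc_le_multichoose (m k : ℕ) : Mc m k ≤ k.multichoose m :=
  csSup_le' fun M ⟨_, hs⟩ => by simpa using hs.le_multichoose

lemma le_Mc_of_mem_finset {β : Type*} {M m k : ℕ} {s : ℕ → β} (h : IsCyclicDist M m s)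
    (S : Finset β) (hS : ∀ x, s x ∈ S) (hk : #S ≤ k) : M ≤ Mc m k := by
  obtain ⟨e⟩ : Nonempty (S ↪ Fin k) := Function.Embedding.nonempty_of_card_le (by simpa)
  have hsub : IsCyclicDist M m fun x => (⟨s x, hS x⟩ : S) :=
    IsCyclicDist.of_comp (f := Subtype.val) h
  exact le_csSup (bddAbove_cyclicDist_lengths m k) ⟨_, hsub.comp e.injective⟩

lemma Mc_le_two_mul_pow {m k : ℕ} (hk : m ≤ k + 1) : Mc m k ≤ (2 * k) ^ m :=
  calc Mc m k ≤ (k + m - 1).choose m := Nat.multichoose_eq k m ▸ Mc_le_multichoose m k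
    _ ≤ (k + m - 1) ^ m := Nat.choose_le_pow _ _
    _ ≤ (2 * k) ^ m := Nat.pow_le_pow_left (by omega) m

lemma mul_add_mod_mul {m N b i : ℕ} (hi : i < m) : (m * b + i) % (m * N) = m * (b % N) + i := by
  rw [Nat.mod_mul, Nat.mul_add_mod, Nat.mod_eq_of_lt hi, Nat.mul_add_div (by omega),
    Nat.div_eq_of_lt hi, add_zero, add_comm]

/-- The class-`i` letter of the window of length `m` starting at `t` sits at position
`m * windowBlock m N t i + i`, cyclically in `[0, m N)`. -/
def windowBlock (m N t i : ℕ) : ℕ := (t / m + if i < t % m then 1 else 0) % N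

lemma cwindow_filter_class {β : Type*} {s : ℕ → β} {m : ℕ} (cls : β → ℕ)
    (hcls : ∀ x, cls (s x) = x % m) {N t i : ℕ} (hi : i < m) :
    (cwindow s (m * N) m t).filter (fun c => cls c = i) = {s (m * windowBlock m N t i + i)} := by
  set u₀ := if i < t % m then m + i - t % m else i - t % m
  have ht := Nat.div_add_mod t m
  have hta := Nat.mod_lt t (show 0 < m by omega)
  have hu₀ : u₀ < m := by simp only [u₀]; split_ifs <;> omega
  have hpos : t + u₀ = m * (t / m + if i < t % m then 1 else 0) + i := by
    simp only [u₀]; split_ifs <;> rw [mul_add] <;> omega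
  have hclass : ∀ u ∈ Multiset.range m,
      ((fun c => cls c = i) ∘ fun u => s ((t + u) % (m * N))) u ↔ u = u₀ := by
    intro u hu
    rw [Multiset.mem_range] at hu
    rw [Function.comp_apply, hcls, Nat.mod_mul_right_mod]
    constructor
    · intro h
      have : t + u ≡ t + u₀ [MOD m] := by
        rw [Nat.ModEq, h, hpos, Nat.mul_add_mod, Nat.mod_eq_of_lt hi]
      simpa [Nat.ModEq, Nat.mod_eq_of_lt hu, Nat.mod_eq_of_lt hu₀] using
        Nat.ModEq.add_left_cancel' t this
    · rintro rfl
      rw [hpos, Nat.mul_add_mod, Nat.mod_eq_of_lt hi]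
  rw [cwindow, Multiset.filter_map, Multiset.filter_congr hclass, Multiset.filter_eq',
    Multiset.count_eq_one_of_mem (Multiset.nodup_range m) (Multiset.mem_range.2 hu₀),
    Multiset.replicate_one, Multiset.map_singleton, hpos, mul_add_mod_mul hi, windowBlock]

lemma windowBlock_of_le {m N t i : ℕ} (h : t % m ≤ i) (ht : t < m * N) :
    windowBlock m N t i = t / m := by
  rw [windowBlock, if_neg (not_lt.2 h), add_zero, Nat.mod_eq_of_lt (Nat.div_lt_of_lt_mul ht)]

lemma windowBlock_of_lt {m N t i : ℕ} (h : i < t % m) : windowBlock m N t i = (t / m + 1) % N := by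
  rw [windowBlock, if_pos h]

lemma succ_mod_mod_two_ne {N j : ℕ} (hN : Even N) (hj : j < N) : (j + 1) % N % 2 ≠ j % 2 := by
  obtain ⟨r, rfl⟩ := hN
  rcases (Nat.succ_le_of_lt hj).lt_or_eq with hlt | heq
  · rw [Nat.mod_eq_of_lt hlt]; omega
  · rw [show j + 1 = r + r from heq, Nat.mod_self]; omega

/-- Since the cycle of blocks has even length, the block parity flips exactly at the offset. -/
lemma mod_eq_of_windowBlock_parity {m N t₁ t₂ : ℕ} (hN : Even N) (h₁ : t₁ < m * N)
    (h₂ : t₂ < m * N) (h : ∀ i < m, windowBlock m N t₁ i % 2 = windowBlock m N t₂ i % 2) :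
    t₁ % m = t₂ % m := by
  wlog hlt : t₁ % m < t₂ % m generalizing t₁ t₂
  · rcases (not_lt.1 hlt).lt_or_eq with hgt | heq
    · exact (this h₂ h₁ (fun i hi => (h i hi).symm) hgt).symm
    · exact heq.symm
  have hm : 0 < m := Nat.pos_of_ne_zero (by rintro rfl; simp at h₁)
  have hj : t₁ / m % 2 = t₂ / m % 2 := by
    have := Nat.mod_lt t₂ hm
    have := h (m - 1) (by omega)
    rwa [windowBlock_of_le (by omega) h₁, windowBlock_of_le (by omega) h₂] at this
  have := h (t₁ % m) (Nat.mod_lt _ hm)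
  rw [windowBlock_of_le le_rfl h₁, windowBlock_of_lt hlt, hj] at this
  exact absurd this.symm (succ_mod_mod_two_ne hN (Nat.div_lt_of_lt_mul h₂))

lemma mod_pow_eq_of_digits_eq {q a b r : ℕ} (h : ∀ i < r, a / q ^ i % q = b / q ^ i % q) :
    a % q ^ r = b % q ^ r := by
  induction r with
  | zero => simp [Nat.mod_one]
  | succ r ih =>
    rw [Nat.mod_pow_succ, Nat.mod_pow_succ, ih fun i hi => h i (by omega), h r (by omega)]

lemma div_eq_of_windowBlock_digits {m q t₁ t₂ : ℕ} (h₁ : t₁ < m * q ^ m) (h₂ : t₂ < m * q ^ m)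
    (ha : t₁ % m = t₂ % m)
    (h : ∀ i < m, windowBlock m (q ^ m) t₁ i / q ^ i % q = windowBlock m (q ^ m) t₂ i / q ^ i % q) :
    t₁ / m = t₂ / m := by
  have hm : 0 < m := Nat.pos_of_ne_zero (by rintro rfl; simp at h₁)
  set a := t₁ % m
  have ham : a ≤ m := (Nat.mod_lt _ hm).le
  have hsplit : q ^ a * q ^ (m - a) = q ^ m := by rw [← pow_add, Nat.add_sub_cancel' ham]
  have hhigh : t₁ / m / q ^ a = t₂ / m / q ^ a := by
    have hlt : ∀ t < m * q ^ m, t / m / q ^ a < q ^ (m - a) := fun t ht =>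
      Nat.div_lt_of_lt_mul (hsplit ▸ Nat.div_lt_of_lt_mul ht)
    rw [← Nat.mod_eq_of_lt (hlt t₁ h₁), ← Nat.mod_eq_of_lt (hlt t₂ h₂)]
    refine mod_pow_eq_of_digits_eq fun i hi => ?_
    have := h (a + i) (by omega)
    rwa [windowBlock_of_le (by omega) h₁, windowBlock_of_le (by omega) h₂, pow_add,
      ← Nat.div_div_eq_div_mul, ← Nat.div_div_eq_div_mul] at this
  have hlow : t₁ / m % q ^ a = t₂ / m % q ^ a := by
    have : (t₁ / m + 1) % q ^ m % q ^ a = (t₂ / m + 1) % q ^ m % q ^ a :=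
      mod_pow_eq_of_digits_eq fun i hi => by
        simpa only [windowBlock_of_lt hi, windowBlock_of_lt (ha ▸ hi)] using h i (by omega)
    rw [Nat.mod_mod_of_dvd _ (pow_dvd_pow q ham), Nat.mod_mod_of_dvd _ (pow_dvd_pow q ham)] at this
    exact Nat.ModEq.add_right_cancel' 1 this
  rw [← Nat.div_add_mod (t₁ / m) (q ^ a), ← Nat.div_add_mod (t₂ / m) (q ^ a), hhigh, hlow]

def digitSeq (m q x : ℕ) : ℕ × ℕ × ℕ := (x % m, x / m / q ^ (x % m) % q, x / m % 2)

lemma digitSeq_mul_add {m q b i : ℕ} (hi : i < m) :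
    digitSeq m q (m * b + i) = (i, b / q ^ i % q, b % 2) := by
  simp only [digitSeq, Nat.mul_add_mod, Nat.mod_eq_of_lt hi, Nat.mul_add_div (by omega : 0 < m),
    Nat.div_eq_of_lt hi, add_zero]

theorem isCyclicDist_digitSeq {m q : ℕ} (hm : 0 < m) (hq : Even q) :
    IsCyclicDist (m * q ^ m) m (digitSeq m q) := by
  intro t₁ t₂ h₁ h₂ hw
  have hletter : ∀ i < m, (windowBlock m (q ^ m) t₁ i / q ^ i % q,
      windowBlock m (q ^ m) t₁ i % 2) = (windowBlock m (q ^ m) t₂ i / q ^ i % q,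
      windowBlock m (q ^ m) t₂ i % 2) := fun i hi => by
    have := congrArg (Multiset.filter fun c => c.1 = i) hw
    simpa [cwindow_filter_class (s := digitSeq m q) Prod.fst (fun _ => rfl) hi,
      digitSeq_mul_add hi] using this
  have ha : t₁ % m = t₂ % m := mod_eq_of_windowBlock_parity (hq.pow_of_ne_zero hm.ne') h₁ h₂
    fun i hi => (Prod.ext_iff.1 (hletter i hi)).2
  have hj : t₁ / m = t₂ / m := div_eq_of_windowBlock_digits h₁ h₂ ha
    fun i hi => (Prod.ext_iff.1 (hletter i hi)).1
  rw [← Nat.div_add_mod t₁ m, ← Nat.div_add_mod t₂ m, ha, hj]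

lemma mul_pow_le_Mc {m q k : ℕ} (hm : 0 < m) (hq : Even q) (hq₀ : 0 < q) (hk : 2 * m * q ≤ k) :
    m * q ^ m ≤ Mc m k := by
  refine le_Mc_of_mem_finset (isCyclicDist_digitSeq hm hq) (range m ×ˢ range q ×ˢ range 2)
    (fun x => ?_) ?_
  · simp only [digitSeq, mem_product, mem_range]
    exact ⟨Nat.mod_lt _ hm, Nat.mod_lt _ hq₀, Nat.mod_lt _ two_pos⟩
  · rw [card_product, card_product, card_range, card_range, card_range]
    linarith

lemma pow_le_mul_Mc {m k : ℕ} (hm : 0 < m) (hk : 4 * m ≤ k) : k ^ m ≤ (4 * m) ^ m * Mc m k := by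
  have hk_lt := Nat.lt_mul_div_succ k (show 0 < 4 * m by omega)
  have hk_ge := Nat.mul_div_le k (4 * m)
  set d := k / (4 * m)
  have hd : 1 ≤ d := (Nat.le_div_iff_mul_le (by omega)).2 (by omega)
  have hk_le : k ≤ 4 * m * (2 * d) := by nlinarith
  have hMc : m * (2 * d) ^ m ≤ Mc m k :=
    mul_pow_le_Mc hm (even_two_mul d) (by omega) (by linarith)
  calc k ^ m ≤ (4 * m * (2 * d)) ^ m := Nat.pow_le_pow_left hk_le m
    _ = (4 * m) ^ m * (2 * d) ^ m := mul_pow _ _ m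
    _ ≤ (4 * m) ^ m * (m * (2 * d) ^ m) := Nat.mul_le_mul_left _ (Nat.le_mul_of_pos_left _ hm)
    _ ≤ (4 * m) ^ m * Mc m k := Nat.mul_le_mul_left _ hMc

/-- For every fixed `m ≥ 1`, `M_m^c(k) = Θ(k^m)` as `k → ∞`. -/
theorem stmt16 (m : ℕ) (hm : 1 ≤ m) :
    ∃ c₁ c₂ : ℝ, 0 < c₁ ∧ 0 < c₂ ∧ ∃ k₀ : ℕ, ∀ k ≥ k₀,
      c₁ * (k : ℝ) ^ m ≤ (Mc m k : ℝ) ∧ (Mc m k : ℝ) ≤ c₂ * (k : ℝ) ^ m := by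
  refine ⟨((4 * m : ℝ) ^ m)⁻¹, 2 ^ m, by positivity, by positivity, 4 * m, fun k hk => ⟨?_, ?_⟩⟩
  · rw [inv_mul_le_iff₀ (by positivity)]
    exact_mod_cast pow_le_mul_Mc hm hk
  · rw [← mul_pow]
    exact_mod_cast Mc_le_two_mul_pow (by omega)
end
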